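/- arXiv:2001.07080 — 6 statements merged into one kernel-verified Lean document; each statement's English description precedes it below -/
import Mathlib

section
/- Let G be a topological group and let Λ ⊆ H ⊆ G be closed subgroups with H normal and G/H compact. Then Λ is cocompact in H if and only if Λ is cocompact in G, and Λ is discrete in H if and only if Λ is discrete in G. In particular, Λ is a lattice in H if and only if Λ is a lattice in G. -/
/-!
Discreteness transfers because `Λ` carries the same subspace topology inside `H` as inside `G`.
The image of `H` in `G ⧸ Λ` is the image of a closed saturated set, so `H ⧸ Λ` is a closed
subspace of `G ⧸ Λ`. Conversely, that image `F` is compact, `H`-invariant, and its `G`-translates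
cover `G ⧸ Λ`. Given an open cover, each `g • F` lies in a finite subunion `V g`, and
`{a | a • F ⊆ V g}` is an open, right-`H`-invariant neighbourhood of `g`, so compactness of
`G ⧸ H` leaves finitely many `g`. This avoids choosing a compact set mapping onto `G ⧸ H`, which
needs local compactness.
-/

open Set Topology
open scoped Pointwise

theorem isOpen_setOf_smul_subset {G X : Type*} [TopologicalSpace G] [TopologicalSpace X]
    [SMul G X] [ContinuousSMul G X] {F V : Set X} (hF : IsCompact F) (hV : IsOpen V) :
    IsOpen {g : G | g • F ⊆ V} := by
  let act : C(G, C(X, X)) := ContinuousMap.curry ⟨fun p : G × X => p.1 • p.2, continuous_smul⟩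
  have : {g : G | g • F ⊆ V} = act ⁻¹' {f | MapsTo f F V} := by
    ext g
    exact image_subset_iff
  rw [this]
  exact (ContinuousMap.isOpen_setOfPred_mapsTo hF hV).preimage act.continuous

theorem CompactSpace.of_isCompact_of_iUnion_smul_eq_univ {G X : Type*} [Group G]
    [TopologicalSpace G] [SeparatelyContinuousMul G] [TopologicalSpace X] [MulAction G X]
    [ContinuousSMul G X] {H : Subgroup G} [CompactSpace (G ⧸ H)] {F : Set X}
    (hF : IsCompact F) (hHF : ∀ h ∈ H, h • F ⊆ F) (hcover : ⋃ g : G, g • F = univ) :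
    CompactSpace X := by
  classical
  refine ⟨isCompact_of_finite_subcover fun U hUo hcov => ?_⟩
  choose t ht using fun g : G =>
    (hF.smul g).elim_finite_subcover U hUo ((subset_univ _).trans hcov)
  let A (g : G) : Set G := {a | a • F ⊆ ⋃ i ∈ t g, U i}
  have hA_open (g : G) : IsOpen (A g) :=
    isOpen_setOf_smul_subset hF (isOpen_biUnion fun i _ => hUo i)
  have hA_mul (g a h : G) (ha : a ∈ A g) (hh : h ∈ H) : a * h ∈ A g := by
    change (a * h) • F ⊆ _
    rw [← smul_smul]
    exact (smul_set_mono (hHF h hh)).trans ha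
  obtain ⟨s, hs⟩ := isCompact_univ.elim_finite_subcover
    (fun g => ((↑) '' A g : Set (G ⧸ H))) (fun g => QuotientGroup.isOpenMap_coe _ (hA_open g))
    (fun q _ => q.inductionOn' fun g => mem_iUnion.2 ⟨g, g, ht g, rfl⟩)
  refine ⟨s.biUnion t, fun x _ => ?_⟩
  obtain ⟨a, hxa⟩ := mem_iUnion.1 (hcover.symm ▸ mem_univ x)
  obtain ⟨g, hg, b, hb, hba⟩ := mem_iUnion₂.1 (hs (mem_univ (a : G ⧸ H)))
  have ha : a ∈ A g := by simpa using hA_mul g b _ hb (QuotientGroup.eq.1 hba)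
  obtain ⟨i, hi, hxi⟩ := mem_iUnion₂.1 (ha hxa)
  exact mem_iUnion₂.2 ⟨i, Finset.mem_biUnion.2 ⟨g, hg, hi⟩, hxi⟩

namespace Subgroup

variable {G : Type*} [Group G] {Λ H : Subgroup G}

variable (Λ H) in
def quotientSubgroupOfToQuotient : H ⧸ Λ.subgroupOf H → G ⧸ Λ :=
  Quotient.map' Subtype.val fun _ _ hab => QuotientGroup.leftRel_apply.mpr <|
    mem_subgroupOf.mp (QuotientGroup.leftRel_apply.mp hab)

theorem quotientSubgroupOfToQuotient_injective :
    Function.Injective (quotientSubgroupOfToQuotient Λ H) := by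
  rintro ⟨a⟩ ⟨b⟩ hab
  exact QuotientGroup.eq.2 (mem_subgroupOf.2 (QuotientGroup.eq.1 hab))

theorem image_quotientSubgroupOfToQuotient (C : Set (H ⧸ Λ.subgroupOf H)) :
    quotientSubgroupOfToQuotient Λ H '' C =
      (↑) '' (Subtype.val '' ((↑) ⁻¹' C : Set H)) := by
  rw [← image_comp]
  conv_lhs => rw [← image_preimage_eq C QuotientGroup.mk_surjective, ← image_comp]
  rfl

variable [TopologicalSpace G]

theorem continuous_quotientSubgroupOfToQuotient :
    Continuous (quotientSubgroupOfToQuotient Λ H) :=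
  continuous_subtype_val.quotient_map' _

theorem isClosedEmbedding_quotientSubgroupOfToQuotient (hΛH : Λ ≤ H)
    (hH : IsClosed (H : Set G)) :
    IsClosedEmbedding (quotientSubgroupOfToQuotient Λ H) := by
  refine .of_continuous_injective_isClosedMap continuous_quotientSubgroupOfToQuotient
    quotientSubgroupOfToQuotient_injective fun C hC => ?_
  set S : Set G := Subtype.val '' ((↑) ⁻¹' C : Set H)
  have hS_mul : S * Λ = S := by
    refine subset_antisymm ?_ (subset_mul_left _ Λ.one_mem)
    rintro _ ⟨_, ⟨h, hC, rfl⟩, l, hl, rfl⟩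
    refine ⟨h * ⟨l, hΛH hl⟩, ?_, rfl⟩
    rwa [mem_preimage, QuotientGroup.mk_mul_of_mem]
    exact mem_subgroupOf.2 hl
  rw [image_quotientSubgroupOfToQuotient, ← (QuotientGroup.isQuotientMap_mk Λ).isClosed_preimage,
    QuotientGroup.preimage_image_mk_eq_mul, hS_mul]
  exact hH.isClosedEmbedding_subtypeVal.isClosedMap _ (hC.preimage QuotientGroup.continuous_mk)

variable [IsTopologicalGroup G]

theorem compactSpace_quotient_of_compactSpace_quotient_subgroupOf [CompactSpace (G ⧸ H)]
    [CompactSpace (H ⧸ Λ.subgroupOf H)] : CompactSpace (G ⧸ Λ) := by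
  refine CompactSpace.of_isCompact_of_iUnion_smul_eq_univ (H := H)
    (isCompact_range (continuous_quotientSubgroupOfToQuotient (Λ := Λ) (H := H))) ?_ ?_
  · rintro h hh _ ⟨_, ⟨q, rfl⟩, rfl⟩
    induction q using QuotientGroup.induction_on with | H k =>
    exact ⟨(⟨h, hh⟩ * k : H), rfl⟩
  · refine eq_univ_of_forall fun x => ?_
    induction x using QuotientGroup.induction_on with | H g =>
    exact mem_iUnion.2 ⟨g, _, ⟨(1 : H), rfl⟩, congrArg QuotientGroup.mk (mul_one g)⟩

theorem compactSpace_quotient_subgroupOf_iff [CompactSpace (G ⧸ H)] (hΛH : Λ ≤ H)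
    (hH : IsClosed (H : Set G)) :
    CompactSpace (H ⧸ Λ.subgroupOf H) ↔ CompactSpace (G ⧸ Λ) :=
  ⟨fun _ => compactSpace_quotient_of_compactSpace_quotient_subgroupOf (H := H),
    fun _ => (isClosedEmbedding_quotientSubgroupOfToQuotient hΛH hH).compactSpace⟩

end Subgroup

theorem stmt0_general {G : Type*} [Group G] [TopologicalSpace G] [IsTopologicalGroup G]
    (H Λ : Subgroup G) (hΛH : Λ ≤ H)
    (hHcl : IsClosed (H : Set G))
    (hGH : CompactSpace (G ⧸ H)) :
    (CompactSpace (H ⧸ Λ.subgroupOf H) ↔ CompactSpace (G ⧸ Λ)) ∧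
      (DiscreteTopology (Λ.subgroupOf H) ↔ DiscreteTopology Λ) ∧
      ((DiscreteTopology (Λ.subgroupOf H) ∧ CompactSpace (H ⧸ Λ.subgroupOf H)) ↔
        (DiscreteTopology Λ ∧ CompactSpace (G ⧸ Λ))) := by
  have hcompact := Subgroup.compactSpace_quotient_subgroupOf_iff hΛH hHcl
  have hdiscrete :=
    (Subgroup.subgroupOfContinuousMulEquivOfLe hΛH).toHomeomorph.discreteTopology_iff
  exact ⟨hcompact, hdiscrete, and_congr hdiscrete hcompact⟩

/-- Let `G` be a topological group and `Λ ⊆ H ⊆ G` closed subgroups with `H`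
normal and `G/H` compact. Then `Λ` is cocompact in `H` iff it is cocompact in `G`, and `Λ` is
discrete in `H` iff it is discrete in `G`; in particular `Λ` is a lattice in `H` iff it is a
lattice in `G`. -/
theorem stmt0 {G : Type*} [Group G] [TopologicalSpace G] [IsTopologicalGroup G]
    (H Λ : Subgroup G) [H.Normal] (hΛH : Λ ≤ H)
    (hHcl : IsClosed (H : Set G)) (hΛcl : IsClosed (Λ : Set G))
    (hGH : CompactSpace (G ⧸ H)) :
    (CompactSpace (H ⧸ Λ.subgroupOf H) ↔ CompactSpace (G ⧸ Λ)) ∧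
      (DiscreteTopology (Λ.subgroupOf H) ↔ DiscreteTopology Λ) ∧
      ((DiscreteTopology (Λ.subgroupOf H) ∧ CompactSpace (H ⧸ Λ.subgroupOf H)) ↔
        (DiscreteTopology Λ ∧ CompactSpace (G ⧸ Λ))) :=
  stmt0_general H Λ hΛH hHcl hGH
end

section
/- A locally compact abelian group G has noncompact identity component if and only if G has no compact open subgroup. -/
/-!
Every open subgroup is clopen and so contains the identity component `G₀`; hence a compact open
subgroup makes `G₀` compact. Conversely, if `G₀` is compact then `G ⧸ G₀` is a totally
disconnected locally compact Hausdorff group, so by van Dantzig it has a compact open subgroup,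
and its preimage in `G` is compact because the quotient map by a compact subgroup is proper.
Van Dantzig's theorem itself: a compact open neighbourhood `V` of `1` has a neighbourhood `W`
of `1` with `V * W ⊆ V`, and the subgroup generated by `W ∩ W⁻¹` is then open and lies in `V`.
-/

open Set Pointwise Topology

section
variable {G : Type*} [Group G] [TopologicalSpace G] [IsTopologicalGroup G]

theorem IsCompact.exists_isCompact_isOpen_subgroup_subset {V : Set G}
    (hVc : IsCompact V) (hVo : IsOpen V) (h1 : (1 : G) ∈ V) :
    ∃ K : Subgroup G, IsCompact (K : Set G) ∧ IsOpen (K : Set G) ∧ (K : Set G) ⊆ V := by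
  obtain ⟨W, hW, hVW⟩ := compact_open_separated_mul_right hVc hVo subset_rfl
  set K := Subgroup.closure (W ∩ W⁻¹)
  have hKo : IsOpen (K : Set G) :=
    K.isOpen_of_mem_nhds (Filter.mem_of_superset (Filter.inter_mem hW (inv_mem_nhds_one G hW))
      Subgroup.subset_closure)
  have hVK : ∀ x ∈ K, ∀ v ∈ V, v * x ∈ V := by
    intro x hx
    induction hx using Subgroup.closure_induction'' with
    | mem x hx => exact fun v hv => hVW (mul_mem_mul hv hx.1)
    | inv_mem x hx => exact fun v hv => hVW (mul_mem_mul hv hx.2)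
    | one => simp
    | mul x y _ _ hx hy => exact fun v hv => mul_assoc v x y ▸ hy _ (hx v hv)
  have hKV : (K : Set G) ⊆ V := fun x hx => one_mul x ▸ hVK x hx 1 h1
  exact ⟨K, hVc.of_isClosed_subset (K.isClosed_of_isOpen hKo) hKV, hKo, hKV⟩

theorem IsTopologicalGroup.exists_isCompact_isOpen_subgroup_subset [LocallyCompactSpace G]
    [T2Space G] [TotallyDisconnectedSpace G] {U : Set G} (hU : U ∈ 𝓝 (1 : G)) :
    ∃ K : Subgroup G, IsCompact (K : Set G) ∧ IsOpen (K : Set G) ∧ (K : Set G) ⊆ U := by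
  obtain ⟨L, hL1, hLU, hLc⟩ := local_compact_nhds hU
  obtain ⟨V, hV, hV1, hVL⟩ :=
    loc_compact_Haus_tot_disc_of_zero_dim.mem_nhds_iff.mp (interior_mem_nhds.mpr hL1)
  have hV : IsClopen V := hV
  obtain ⟨K, hKc, hKo, hKV⟩ := IsCompact.exists_isCompact_isOpen_subgroup_subset
    (hLc.of_isClosed_subset hV.isClosed (hVL.trans interior_subset)) hV.isOpen hV1
  exact ⟨K, hKc, hKo, hKV.trans (hVL.trans (interior_subset.trans hLU))⟩

theorem QuotientGroup.isProperMap_mk {N : Subgroup G} (hN : IsCompact (N : Set G)) :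
    IsProperMap ((↑) : G → G ⧸ N) := by
  refine isProperMap_iff_isClosedMap_and_compact_fibers.mpr
    ⟨continuous_quotient_mk', isClosedMap_coe hN, fun q => ?_⟩
  obtain ⟨g, rfl⟩ := mk_surjective q
  have : (↑) ⁻¹' {(g : G ⧸ N)} = g • (N : Set G) := QuotientGroup.eq_class_eq_leftCoset N g
  rw [this, ← image_smul]
  exact hN.image (continuous_const_smul g)

instance QuotientGroup.totallyDisconnectedSpace_connectedComponentOfOne :
    TotallyDisconnectedSpace (G ⧸ Subgroup.connectedComponentOfOne G) := by
  set N := Subgroup.connectedComponentOfOne G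
  have hfiber : ∀ g : G, ((↑) : G → G ⧸ N) ⁻¹' {(g : G ⧸ N)} = connectedComponent g := fun g =>
    (QuotientGroup.eq_class_eq_leftCoset N g).trans <|
      (smul_connectedComponent g 1).trans (by rw [mul_one])
  have hfibers : ∀ q : G ⧸ N, IsConnected (((↑) : G → G ⧸ N) ⁻¹' {q}) := fun q => by
    obtain ⟨g, rfl⟩ := mk_surjective q
    exact hfiber g ▸ isConnected_connectedComponent
  refine totallyDisconnectedSpace_iff_connectedComponent_singleton.mpr fun q => ?_
  obtain ⟨g, rfl⟩ := mk_surjective q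
  rw [← (isQuotientMap_mk N).isCoinducing.image_connectedComponent hfibers, ← hfiber,
    image_preimage_eq _ mk_surjective]

end

/-- A locally compact abelian group has noncompact identity component iff it
has no compact open subgroup. -/
theorem stmt4 {G : Type*} [CommGroup G] [TopologicalSpace G] [IsTopologicalGroup G]
    [LocallyCompactSpace G] [T2Space G] :
    ¬ IsCompact (connectedComponent (1 : G)) ↔
      ¬ ∃ K : Subgroup G, IsCompact (K : Set G) ∧ IsOpen (K : Set G) := by
  refine not_congr ⟨fun hN => ?_, fun ⟨K, hKc, hKo⟩ => ?_⟩
  · set N := Subgroup.connectedComponentOfOne G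
    -- an instance argument of `QuotientGroup.instT3Space`, making `G ⧸ N` Hausdorff
    have : IsClosed (N : Set G) := isClosed_connectedComponent
    obtain ⟨K, hKc, hKo, -⟩ :=
      IsTopologicalGroup.exists_isCompact_isOpen_subgroup_subset (G := G ⧸ N) Filter.univ_mem
    exact ⟨K.comap (QuotientGroup.mk' N), (QuotientGroup.isProperMap_mk hN).isCompact_preimage hKc,
      hKo.preimage continuous_quotient_mk'⟩
  · have hK : IsClopen (K : Set G) := ⟨K.isClosed_of_isOpen hKo, hKo⟩
    exact hKc.of_isClosed_subset isClosed_connectedComponent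
      (hK.connectedComponent_subset K.one_mem)
end

section
/- Let G be a locally compact abelian group with compact identity component. Then the Braconnier modular function Δ_G : Aut(G) → (0,∞) takes only rational values. -/
/-!
Compactness of the identity component gives a compact open neighbourhood `W` of `1`, and the
stabilizer of `W` under left translation is then a compact open subgroup `H` (van Dantzig).
Its image `α H` is again a compact open subgroup, so `N = H ∩ α H` has finite index `m` in `H`
and `n` in `α H`. Hence `μ (α H) / μ H = n / m`, while by definition this ratio is `Δ`.
-/

open Set Filter MeasureTheory
open scoped Pointwise

theorem exists_isClopen_mem_subset_of_connectedComponent_subset {X : Type*} [TopologicalSpace X]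
    [CompactSpace X] [T2Space X] {x : X} {U : Set X} (hU : IsOpen U)
    (hxU : connectedComponent x ⊆ U) : ∃ Z, IsClopen Z ∧ x ∈ Z ∧ Z ⊆ U := by
  have : Nonempty {Z : Set X // IsClopen Z ∧ x ∈ Z} := ⟨⟨univ, isClopen_univ, mem_univ x⟩⟩
  obtain ⟨⟨Z, hZ, hxZ⟩, hZU⟩ := exists_subset_nhds_of_compactSpace
    (V := fun Z : {Z : Set X // IsClopen Z ∧ x ∈ Z} ↦ (Z : Set X))
    (fun Z W ↦ ⟨⟨Z ∩ W, Z.2.1.inter W.2.1, Z.2.2, W.2.2⟩, inter_subset_left, inter_subset_right⟩)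
    (fun Z ↦ Z.2.1.isClosed)
    (fun y hy ↦ hU.mem_nhds (hxU (connectedComponent_eq_iInter_isClopen x ▸ hy)))
  exact ⟨Z, hZ, hxZ, hZU⟩

theorem exists_isCompact_isOpen_mem_of_isCompact_connectedComponent {X : Type*}
    [TopologicalSpace X] [LocallyCompactSpace X] [T2Space X] {x : X}
    (hx : IsCompact (connectedComponent x)) : ∃ W, IsCompact W ∧ IsOpen W ∧ x ∈ W := by
  obtain ⟨K, hK, hxK, -⟩ := exists_compact_between hx isOpen_univ (subset_univ _)
  have : CompactSpace K := isCompact_iff_compactSpace.mp hK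
  let x' : K := ⟨x, interior_subset (hxK mem_connectedComponent)⟩
  have hx' : connectedComponent x' ⊆ (↑) ⁻¹' interior K := fun y hy ↦
    hxK ((continuous_subtype_val.image_connectedComponent_subset x') ⟨y, hy, rfl⟩)
  obtain ⟨Z, hZ, hxZ, hZK⟩ := exists_isClopen_mem_subset_of_connectedComponent_subset
    (isOpen_interior.preimage continuous_subtype_val) hx'
  refine ⟨(↑) '' Z, hZ.isClosed.isCompact.image continuous_subtype_val, ?_, ⟨x', hxZ, rfl⟩⟩
  -- near a point of `interior K`, neighbourhoods in `K` are neighbourhoods in `X`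
  refine isOpen_iff_mem_nhds.2 ?_
  rintro _ ⟨y, hy, rfl⟩
  rw [← nhdsWithin_eq_nhds.2 (mem_interior_iff_mem_nhds.1 (hZK hy)), ← map_nhds_subtype_val]
  exact image_mem_map (hZ.isOpen.mem_nhds hy)

theorem exists_isOpen_subgroup_subset_of_isCompact_isOpen {G : Type*} [Group G]
    [TopologicalSpace G] [IsTopologicalGroup G] {W : Set G} (hWc : IsCompact W) (hWo : IsOpen W)
    (hW : (1 : G) ∈ W) : ∃ H : Subgroup G, IsOpen (H : Set G) ∧ (H : Set G) ⊆ W := by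
  obtain ⟨V, hV, hVW⟩ := compact_open_separated_mul_left hWc hWo subset_rfl
  refine ⟨MulAction.stabilizer G W, Subgroup.isOpen_of_mem_nhds _ (g := 1) ?_, ?_⟩
  · refine mem_of_superset (inter_mem hV (inv_mem_nhds_one G hV)) fun g ⟨hg, hg'⟩ ↦ ?_
    have hgW : g • W ⊆ W := (smul_set_subset_smul hg).trans hVW
    have hgW' : g⁻¹ • W ⊆ W := (smul_set_subset_smul (mem_inv.1 hg')).trans hVW
    exact hgW.antisymm (subset_smul_set_iff.2 hgW')
  · intro g hg
    have : g * 1 ∈ g • W := smul_mem_smul_set hW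
    rwa [mul_one, show g • W = W from hg] at this

theorem exists_isCompact_isOpen_subgroup_of_isCompact_connectedComponent {G : Type*} [Group G]
    [TopologicalSpace G] [IsTopologicalGroup G] [LocallyCompactSpace G] [T2Space G]
    (hG₀ : IsCompact (connectedComponent (1 : G))) :
    ∃ H : Subgroup G, IsOpen (H : Set G) ∧ IsCompact (H : Set G) := by
  obtain ⟨W, hWc, hWo, hW⟩ := exists_isCompact_isOpen_mem_of_isCompact_connectedComponent hG₀
  obtain ⟨H, hHo, hHW⟩ := exists_isOpen_subgroup_subset_of_isCompact_isOpen hWc hWo hW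
  exact ⟨H, hHo, hWc.of_isClosed_subset (H.isClosed_of_isOpen hHo) hHW⟩

instance Subgroup.measurableMul {G : Type*} [Group G] [MeasurableSpace G] [MeasurableMul G]
    (K : Subgroup G) : MeasurableMul K :=
  ⟨fun c ↦ (measurable_subtype_coe.const_mul (c : G)).subtype_mk,
    fun c ↦ (measurable_subtype_coe.mul_const (c : G)).subtype_mk⟩

theorem Subgroup.relIndex_mul_measure {G : Type*} [Group G] [MeasurableSpace G] [MeasurableMul G]
    (μ : Measure G) [μ.IsMulLeftInvariant] {H K : Subgroup G} (hHK : H ≤ K)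
    [H.IsFiniteRelIndex K] (hH : MeasurableSet (H : Set G)) (hK : MeasurableSet (K : Set G)) :
    H.relIndex K * μ H = μ K := by
  have hf : MeasurableEmbedding K.subtype := MeasurableEmbedding.subtype_coe hK
  have := Measure.IsMulLeftInvariant.comap μ hf
  have : (H.subgroupOf K).FiniteIndex := ⟨Subgroup.IsFiniteRelIndex.relIndex_ne_zero⟩
  have h := (H.subgroupOf K).index_mul_measure (hH.preimage measurable_subtype_coe)
    (μ.comap K.subtype)
  rwa [hf.comap_apply, hf.comap_apply, image_univ, K.coe_subtype, Subtype.range_coe,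
    Subgroup.coe_subgroupOf, K.coe_subtype, image_preimage_eq_of_subset (by simpa using hHK),
    ← Subgroup.relIndex] at h

theorem Subgroup.isFiniteRelIndex_of_isOpen_of_isCompact {G : Type*} [Group G]
    [TopologicalSpace G] [IsTopologicalGroup G] {H K : Subgroup G} (hH : IsOpen (H : Set G))
    (hK : IsCompact (K : Set G)) : H.IsFiniteRelIndex K :=
  have : CompactSpace K := isCompact_iff_compactSpace.mp hK
  have := (H.subgroupOf K).quotient_finite_of_isOpen (K.subgroupOf_isOpen H hH)
  ⟨(H.subgroupOf K).finiteIndex_of_finite_quotient.index_ne_zero⟩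

theorem Subgroup.relIndex_inf_mul_measure_eq {G : Type*} [Group G] [TopologicalSpace G]
    [IsTopologicalGroup G] [MeasurableSpace G] [BorelSpace G] (μ : Measure G)
    [μ.IsMulLeftInvariant] {H K : Subgroup G} (hHo : IsOpen (H : Set G))
    (hKo : IsOpen (K : Set G)) (hHc : IsCompact (H : Set G)) (hKc : IsCompact (K : Set G)) :
    (H ⊓ K).relIndex K * μ H = (H ⊓ K).relIndex H * μ K := by
  have hHKo : IsOpen ((H ⊓ K : Subgroup G) : Set G) := hHo.inter hKo
  have := isFiniteRelIndex_of_isOpen_of_isCompact hHKo hHc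
  have := isFiniteRelIndex_of_isOpen_of_isCompact hHKo hKc
  rw [← relIndex_mul_measure μ inf_le_left hHKo.measurableSet hHo.measurableSet,
    ← relIndex_mul_measure μ inf_le_right hHKo.measurableSet hKo.measurableSet]
  ring

/-- If a locally compact abelian group `G` has compact identity component, then
the Braconnier modular function takes only rational values: for every topological automorphism
`α` of `G`, the Haar scaling factor `Δ` of `α` is rational. -/
theorem stmt9 {G : Type*} [CommGroup G] [TopologicalSpace G] [IsTopologicalGroup G]
    [LocallyCompactSpace G] [T2Space G] [MeasurableSpace G] [BorelSpace G]
    (hG₀ : IsCompact (connectedComponent (1 : G)))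
    (μ : Measure G) [μ.IsHaarMeasure]
    (α : G ≃* G) (hα : Continuous α) (hα' : Continuous α.symm)
    (Δ : ℝ) (hΔpos : 0 < Δ)
    (hΔ : ∀ S : Set G, MeasurableSet S → μ (α '' S) = ENNReal.ofReal Δ * μ S) :
    ∃ q : ℚ, Δ = (q : ℝ) := by
  obtain ⟨H, hHo, hHc⟩ := exists_isCompact_isOpen_subgroup_of_isCompact_connectedComponent hG₀
  let e : G ≃ₜ G := { α.toEquiv with continuous_toFun := hα, continuous_invFun := hα' }
  let L : Subgroup G := H.map α.toMonoidHom
  have hL : (L : Set G) = e '' H := H.coe_map _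
  have hLo : IsOpen (L : Set G) := hL ▸ e.isOpenMap _ hHo
  have hLc : IsCompact (L : Set G) := hL ▸ hHc.image e.continuous
  have hμL : μ L = ENNReal.ofReal Δ * μ H := hL ▸ hΔ _ hHo.measurableSet
  have hH_ne_zero : μ H ≠ 0 := (hHo.measure_pos μ ⟨1, H.one_mem⟩).ne'
  have hH_ne_top : μ H ≠ ⊤ := hHc.measure_lt_top.ne
  have hindex := Subgroup.relIndex_inf_mul_measure_eq μ hHo hLo hHc hLc
  rw [hμL, ← mul_assoc, ENNReal.mul_left_inj hH_ne_zero hH_ne_top] at hindex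
  have hm : (H ⊓ L).relIndex H ≠ 0 :=
    (Subgroup.isFiniteRelIndex_of_isOpen_of_isCompact (hHo.inter hLo) hHc).relIndex_ne_zero
  refine ⟨(H ⊓ L).relIndex L / (H ⊓ L).relIndex H, ?_⟩
  have hreal := congrArg ENNReal.toReal hindex
  rw [ENNReal.toReal_mul, ENNReal.toReal_ofReal hΔpos.le, ENNReal.toReal_natCast,
    ENNReal.toReal_natCast] at hreal
  rw [Rat.cast_div, Rat.cast_natCast, Rat.cast_natCast, hreal]
  field_simp
end

section
/- Let H be a closed normal subgroup of a locally compact group G, and let α be a topological automorphism of G with α(H) = H. Let α|_H and α̃ denote the induced automorphisms of H and G/H. Then Δ_G(α) = Δ_H(α|_H) · Δ_{G/H}(α̃), where Δ denotes the Braconnier modular function (the Haar-measure scaling factor of an automorphism). -/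
/-!
Integrating first over the cosets of `H` and then over `G ⧸ H` gives a left-invariant positive
functional `Λ f = ∫_{G/H} ∫_H f (x h) dh dẋ` on `C_c(G)`. The Fubini argument behind the
uniqueness of Haar measure applies verbatim to `Λ` and shows that it is proportional to the Haar
integral of `G`: `Λ f · ∫ g = ∫ f · Λ g`. Replacing `f` by `f ∘ α⁻¹` multiplies `∫ f` by
`Δ_G(α)`, while on each coset `x H` it multiplies the inner integral by `Δ_H(α|_H)` and moves the
coset to `α⁻¹(x) H`, so that `Λ f` gets multiplied by `Δ_H(α|_H) · Δ_{G/H}(α̃)`. Testing on a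
nonnegative bump function, for which both `Λ` and `∫` are positive, gives the identity.
-/

open MeasureTheory Function Topology

section FiberIntegral

variable {G : Type*} [Group G] [TopologicalSpace G] [IsTopologicalGroup G]
  {H : Subgroup G} [MeasurableSpace H] [BorelSpace H] (μH : Measure H)

lemma continuous_integral_comp_mul_subgroup [IsFiniteMeasureOnCompacts μH]
    (hH : IsClosed (H : Set G)) {P : Type*} [TopologicalSpace P] [LocallyCompactSpace P]
    {k : P → G → ℝ} (hk : Continuous (uncurry k)) {a : P → G} (ha : Continuous a)
    {C : Set G} (hC : IsCompact C) (hkC : ∀ p x, k p x ≠ 0 → x ∈ C) :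
    Continuous fun p => ∫ h : H, k p (a p * h) ∂μH := by
  refine continuous_iff_continuousAt.2 fun p₀ => ?_
  obtain ⟨t, ht, hp₀t⟩ := exists_compact_mem_nhds p₀
  refine (continuousOn_integral_of_compact_support
    (hH.isClosedEmbedding_subtypeVal.isCompact_preimage ((ht.image ha).inv.mul hC).closure)
    (by fun_prop) fun p h hp hh => ?_).continuousAt hp₀t
  by_contra hne
  exact hh (subset_closure
    ⟨(a p)⁻¹, Set.inv_mem_inv.2 ⟨p, hp, rfl⟩, a p * h, hkC _ _ hne, by group⟩)

variable [μH.IsMulLeftInvariant]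

noncomputable def fiberIntegral (f : G → ℝ) : G ⧸ H → ℝ :=
  fun q => q.liftOn' (fun x => ∫ h, f (x * h) ∂μH) fun x y hxy => by
    obtain ⟨k, rfl⟩ : ∃ k : H, x * k = y :=
      ⟨⟨x⁻¹ * y, QuotientGroup.leftRel_apply.mp hxy⟩, by simp⟩
    simpa [mul_assoc] using (integral_mul_left_eq_self (fun h : H => f (x * h)) k).symm

@[simp] lemma fiberIntegral_mk (f : G → ℝ) (x : G) :
    fiberIntegral μH f x = ∫ h, f (x * h) ∂μH := rfl

lemma fiberIntegral_const_mul (c : ℝ) (f : G → ℝ) (q : G ⧸ H) :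
    fiberIntegral μH (fun x => c * f x) q = c * fiberIntegral μH f q := by
  induction q using QuotientGroup.induction_on with
  | H x => exact integral_const_mul c _

lemma fiberIntegral_nonneg {f : G → ℝ} (hf : 0 ≤ f) (q : G ⧸ H) : 0 ≤ fiberIntegral μH f q := by
  induction q using QuotientGroup.induction_on with
  | H x => exact integral_nonneg fun h => hf _

lemma fiberIntegral_comp_mul_left [H.Normal] (f : G → ℝ) (y : G) (q : G ⧸ H) :
    fiberIntegral μH (fun x => f (y * x)) q = fiberIntegral μH f (y * q) := by
  induction q using QuotientGroup.induction_on with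
  | H x => simp only [← QuotientGroup.mk_mul, fiberIntegral_mk, mul_assoc]

lemma support_fiberIntegral_subset (f : G → ℝ) :
    support (fiberIntegral μH f) ⊆ (↑) '' support f := by
  intro q hq
  induction q using QuotientGroup.induction_on with
  | H x =>
    obtain ⟨h, hh⟩ : ∃ h : H, f (x * h) ≠ 0 := by
      by_contra! hf
      simp [hf] at hq
    exact ⟨x * h, hh, QuotientGroup.mk_mul_of_mem x h.2⟩

lemma HasCompactSupport.fiberIntegral [H.Normal] {f : G → ℝ} (hf : HasCompactSupport f) :
    HasCompactSupport (fiberIntegral μH f) :=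
  .of_support_subset_isCompact (hf.image QuotientGroup.continuous_mk)
    ((support_fiberIntegral_subset μH f).trans (Set.image_mono (subset_tsupport f)))

lemma Continuous.fiberIntegral [IsFiniteMeasureOnCompacts μH] [LocallyCompactSpace G]
    (hH : IsClosed (H : Set G)) {f : G → ℝ} (hf : Continuous f) (h'f : HasCompactSupport f) :
    Continuous (fiberIntegral μH f) :=
  (QuotientGroup.isQuotientMap_mk H).continuous_iff.2 <|
    continuous_integral_comp_mul_subgroup μH hH (k := fun _ => f) (hf.comp continuous_snd)
      continuous_id h'f fun _ _ hx => subset_tsupport f hx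

variable {Y : Type*} [TopologicalSpace Y] {k : G → Y → ℝ}

lemma continuous_uncurry_fiberIntegral [IsFiniteMeasureOnCompacts μH] [LocallyCompactSpace G]
    [LocallyCompactSpace Y] (hH : IsClosed (H : Set G)) (hk : Continuous (uncurry k))
    (h'k : HasCompactSupport (uncurry k)) :
    Continuous (uncurry fun q y => fiberIntegral μH (k · y) q) :=
  (QuotientGroup.isOpenQuotientMap_mk.prodMap IsOpenQuotientMap.id).isQuotientMap.continuous_iff.2
    <| continuous_integral_comp_mul_subgroup μH hH (k := fun (p : G × Y) x => k x p.2)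
      (by fun_prop) continuous_fst (h'k.image continuous_fst)
      fun (p : G × Y) x hx => ⟨(x, p.2), subset_tsupport (uncurry k) hx, rfl⟩

lemma fiberIntegral_integral_comm [IsFiniteMeasureOnCompacts μH] (hH : IsClosed (H : Set G))
    (hk : Continuous (uncurry k)) (h'k : HasCompactSupport (uncurry k))
    [MeasurableSpace Y] [BorelSpace Y] (ν : Measure Y) [IsFiniteMeasureOnCompacts ν]
    (q : G ⧸ H) :
    fiberIntegral μH (fun x => ∫ y, k x y ∂ν) q = ∫ y, fiberIntegral μH (k · y) q ∂ν := by
  induction q using QuotientGroup.induction_on with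
  | H x =>
    have hx : IsClosedEmbedding fun p : H × Y => (x * p.1, p.2) :=
      ((Homeomorph.mulLeft x).isClosedEmbedding.comp hH.isClosedEmbedding_subtypeVal).prodMap
        .id
    exact integral_integral_swap_of_hasCompactSupport (f := fun (h : H) y => k (x * h) y)
      (hk.comp hx.continuous) (h'k.comp_isClosedEmbedding hx)

variable [MeasurableSpace (G ⧸ H)] (μQ : Measure (G ⧸ H))

noncomputable def weilIntegral (f : G → ℝ) : ℝ := ∫ q, fiberIntegral μH f q ∂μQ

lemma weilIntegral_const_mul (c : ℝ) (f : G → ℝ) :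
    weilIntegral μH μQ (fun x => c * f x) = c * weilIntegral μH μQ f := by
  simp only [weilIntegral, fiberIntegral_const_mul, integral_const_mul]

end FiberIntegral

lemma integral_comp_inv_mul_pos {G : Type*} [Group G] [TopologicalSpace G]
    [IsTopologicalGroup G] [MeasurableSpace G] [BorelSpace G] (ν : Measure G)
    [IsFiniteMeasureOnCompacts ν] [ν.IsOpenPosMeasure]
    {g : G → ℝ} (hg : Continuous g) (h'g : HasCompactSupport g) (g_nonneg : 0 ≤ g) {x₀ : G}
    (g_pos : g x₀ ≠ 0) (x : G) : 0 < ∫ y, g (y⁻¹ * x) ∂ν := by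
  have C : Continuous fun y => g (y⁻¹ * x) := by fun_prop
  refine (integral_pos_iff_support_of_nonneg (f := fun y => g (y⁻¹ * x))
    (fun y => g_nonneg (y⁻¹ * x)) ?_).2 ?_
  · exact C.integrable_of_hasCompactSupport
      (h'g.comp_homeomorph ((Homeomorph.inv G).trans (Homeomorph.mulRight x)))
  · exact C.isOpen_support.measure_pos ν ⟨x * x₀⁻¹, by simpa using g_pos⟩

section WeilIntegral

variable {G : Type*} [Group G] [TopologicalSpace G] [IsTopologicalGroup G] {H : Subgroup G}
  [H.Normal] [MeasurableSpace H] [BorelSpace H] (μH : Measure H) [μH.IsHaarMeasure]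
  [MeasurableSpace (G ⧸ H)] [BorelSpace (G ⧸ H)] (μQ : Measure (G ⧸ H)) [μQ.IsHaarMeasure]

lemma weilIntegral_comp_mul_left (f : G → ℝ) (y : G) :
    weilIntegral μH μQ (fun x => f (y * x)) = weilIntegral μH μQ f := by
  simp only [weilIntegral, fiberIntegral_comp_mul_left]
  exact integral_mul_left_eq_self (fiberIntegral μH f) (y : G ⧸ H)

lemma weilIntegral_integral_comm [LocallyCompactSpace G] (hH : IsClosed (H : Set G))
    {k : G → G → ℝ} (hk : Continuous (uncurry k)) (h'k : HasCompactSupport (uncurry k))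
    [MeasurableSpace G] [BorelSpace G] (ν : Measure G) [IsFiniteMeasureOnCompacts ν] :
    weilIntegral μH μQ (fun x => ∫ y, k x y ∂ν) = ∫ y, weilIntegral μH μQ (k · y) ∂ν := by
  simp only [weilIntegral, fiberIntegral_integral_comm μH hH hk h'k ν]
  refine integral_integral_swap_of_hasCompactSupport
    (continuous_uncurry_fiberIntegral μH hH hk h'k) (.of_support_subset_isCompact
      (((h'k.image continuous_fst).image QuotientGroup.continuous_mk).prod
        (h'k.image continuous_snd)) ?_)
  rintro ⟨q, y⟩ hqy
  obtain ⟨x, hx, rfl⟩ := support_fiberIntegral_subset μH (k · y) hqy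
  have hxy : (x, y) ∈ tsupport (uncurry k) := subset_tsupport (uncurry k) hx
  exact ⟨⟨x, ⟨_, hxy, rfl⟩, rfl⟩, _, hxy, rfl⟩

lemma weilIntegral_pos [LocallyCompactSpace G] (hH : IsClosed (H : Set G)) {f : G → ℝ}
    (hf : Continuous f) (h'f : HasCompactSupport f) (f_nonneg : 0 ≤ f) {x₀ : G} (f_pos : f x₀ ≠ 0) :
    0 < weilIntegral μH μQ f := by
  have hfiber : 0 < fiberIntegral μH f x₀ := by
    rw [fiberIntegral_mk]
    refine Continuous.integral_pos_of_hasCompactSupport_nonneg_nonzero (x := 1) (by fun_prop)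
      ((h'f.comp_homeomorph (Homeomorph.mulLeft x₀)).comp_isClosedEmbedding
        hH.isClosedEmbedding_subtypeVal) (fun _ => f_nonneg _) (by simpa using f_pos)
  exact (hf.fiberIntegral μH hH h'f).integral_pos_of_hasCompactSupport_nonneg_nonzero
    (h'f.fiberIntegral μH) (fiberIntegral_nonneg μH f_nonneg) hfiber.ne'

-- The proof of `Measure.integral_isMulLeftInvariant_isMulRightInvariant_combo`, run for
-- `weilIntegral`: it only uses left invariance and Fubini's theorem against `ν`.
lemma weilIntegral_eq_mul [LocallyCompactSpace G] [MeasurableSpace G] [BorelSpace G]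
    (hH : IsClosed (H : Set G)) (ν : Measure G) [IsFiniteMeasureOnCompacts ν]
    [ν.IsMulRightInvariant] [ν.IsOpenPosMeasure] {f g : G → ℝ} (hf : Continuous f)
    (h'f : HasCompactSupport f) (hg : Continuous g) (h'g : HasCompactSupport g) (g_nonneg : 0 ≤ g)
    {x₀ : G} (g_pos : g x₀ ≠ 0) :
    weilIntegral μH μQ f
      = (∫ y, f y * (∫ z, g (z⁻¹ * y) ∂ν)⁻¹ ∂ν) * weilIntegral μH μQ g := by
  let D : G → ℝ := fun x => ∫ y, g (y⁻¹ * x) ∂ν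
  have D_pos (x : G) : 0 < D x := integral_comp_inv_mul_pos ν hg h'g g_nonneg g_pos x
  have D_cont : Continuous D := continuous_integral_apply_inv_mul hg h'g
  let k : G → G → ℝ := fun x y => f x * (D x)⁻¹ * g (y⁻¹ * x)
  have hk : Continuous (uncurry k) :=
    ((hf.comp continuous_fst).mul
      ((D_cont.comp continuous_fst).inv₀ fun _ => (D_pos _).ne')).mul
      (hg.comp (continuous_snd.inv.mul continuous_fst))
  have h'k : HasCompactSupport (uncurry k) := by
    refine .of_support_subset_isCompact (h'f.prod (h'f.mul h'g.inv)) ?_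
    rintro ⟨x, y⟩ hxy
    have hfx : f x ≠ 0 := fun h => hxy (by simp [k, h])
    have hgx : g (y⁻¹ * x) ≠ 0 := fun h => hxy (by simp [k, h])
    exact ⟨subset_tsupport f hfx, x, subset_tsupport f hfx, (y⁻¹ * x)⁻¹,
      Set.inv_mem_inv.2 (subset_tsupport g hgx), by group⟩
  let k' : G → G → ℝ := fun x y => f (y * x) * (D (y * x))⁻¹ * g x
  -- the homeomorphism is `(x, y) ↦ (y * x, y)`
  have hkk' : uncurry k' = uncurry k ∘ ((Homeomorph.prodComm G G).trans
      ((Homeomorph.shearMulRight G).trans (Homeomorph.prodComm G G))) := by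
    ext ⟨x, y⟩; simp [k, k']
  have hk' : Continuous (uncurry k') := hkk' ▸ hk.comp (Homeomorph.continuous _)
  have h'k' : HasCompactSupport (uncurry k') := hkk' ▸ h'k.comp_homeomorph _
  have f_eq : f = fun x => ∫ y, k x y ∂ν := by
    ext x
    rw [integral_const_mul, mul_assoc, inv_mul_cancel₀ (D_pos x).ne', mul_one]
  calc weilIntegral μH μQ f
      = ∫ y, weilIntegral μH μQ (k · y) ∂ν := by
        conv_lhs => rw [f_eq]
        exact weilIntegral_integral_comm μH μQ hH hk h'k ν
    _ = ∫ y, weilIntegral μH μQ (k' · y) ∂ν := by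
        congr 1 with y
        rw [← weilIntegral_comp_mul_left μH μQ _ y]
        simp [k, k']
    _ = weilIntegral μH μQ (fun x => ∫ y, k' x y ∂ν) :=
        (weilIntegral_integral_comm μH μQ hH hk' h'k' ν).symm
    _ = weilIntegral μH μQ (fun x => (∫ y, f y * (D y)⁻¹ ∂ν) * g x) := by
        congr 1 with x
        rw [integral_mul_const, integral_mul_right_eq_self (fun y => f y * (D y)⁻¹) x]
    _ = _ := weilIntegral_const_mul μH μQ _ g

lemma weilIntegral_mul_integral_eq [LocallyCompactSpace G] [MeasurableSpace G] [BorelSpace G]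
    (hH : IsClosed (H : Set G)) (μG : Measure G) [μG.IsHaarMeasure] {f g : G → ℝ}
    (hf : Continuous f) (h'f : HasCompactSupport f) (hg : Continuous g)
    (h'g : HasCompactSupport g) (g_nonneg : 0 ≤ g) {x₀ : G} (g_pos : g x₀ ≠ 0) :
    weilIntegral μH μQ f * ∫ x, g x ∂μG = (∫ x, f x ∂μG) * weilIntegral μH μQ g := by
  rw [weilIntegral_eq_mul μH μQ hH μG.inv hf h'f hg h'g g_nonneg g_pos,
    Measure.integral_isMulLeftInvariant_isMulRightInvariant_combo (ν := μG.inv) hf h'f hg h'g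
      g_nonneg g_pos]
  ring

end WeilIntegral

section Automorphism

variable {X : Type*} [TopologicalSpace X] [MeasurableSpace X] [BorelSpace X] {μ : Measure X}
  {Δ : ENNReal}

lemma map_symm_eq_smul_of_measure_image_eq_mul (e : X ≃ₜ X)
    (hΔ : ∀ S, MeasurableSet S → μ (e '' S) = Δ * μ S) :
    μ.map e.symm = Δ • μ := by
  ext S hS
  rw [e.symm.measurableEmbedding.map_apply, Measure.smul_apply, smul_eq_mul, ← hΔ S hS,
    e.image_eq_preimage_symm]

lemma integral_comp_symm_of_measure_image_eq_mul (e : X ≃ₜ X)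
    (hΔ : ∀ S, MeasurableSet S → μ (e '' S) = Δ * μ S) (f : X → ℝ) :
    ∫ x, f (e.symm x) ∂μ = Δ.toReal * ∫ x, f x ∂μ := by
  rw [← e.symm.measurableEmbedding.integral_map, map_symm_eq_smul_of_measure_image_eq_mul e hΔ,
    integral_smul_measure, smul_eq_mul]

lemma ne_top_of_measure_image_eq_mul [LocallyCompactSpace X] [Nonempty X]
    [IsFiniteMeasureOnCompacts μ] [μ.IsOpenPosMeasure] {e : X → X} (he : Continuous e)
    (hΔ : ∀ S, MeasurableSet S → μ (e '' S) = Δ * μ S) : Δ ≠ ⊤ := by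
  obtain ⟨K, hK, hK_nhds⟩ := exists_compact_mem_nhds (Classical.arbitrary X)
  have hpos : μ (interior K) ≠ 0 :=
    (isOpen_interior.measure_pos μ ⟨_, mem_interior_iff_mem_nhds.2 hK_nhds⟩).ne'
  have hfin : μ (e '' interior K) ≠ ⊤ :=
    ((measure_mono (Set.image_mono interior_subset)).trans_lt (hK.image he).measure_lt_top).ne
  rintro rfl
  exact hfin (by rw [hΔ _ isOpen_interior.measurableSet, ENNReal.top_mul hpos])

end Automorphism

section FiberAutomorphism

variable {G : Type*} [Group G] [TopologicalSpace G] [IsTopologicalGroup G] {H : Subgroup G}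
  [H.Normal] [MeasurableSpace H] [BorelSpace H] (μH : Measure H) [μH.IsHaarMeasure]
  (α : G ≃* G) (β : H ≃* H) (γ : (G ⧸ H) ≃* (G ⧸ H))

lemma fiberIntegral_comp_symm (hβα : ∀ h : H, (β h : G) = α h) (hγα : ∀ g : G, γ g = α g)
    {c : ℝ}
    (hc : ∀ f : H → ℝ, ∫ h, f (β.symm h) ∂μH = c * ∫ h, f h ∂μH) (f : G → ℝ) (q : G ⧸ H) :
    fiberIntegral μH (fun x => f (α.symm x)) q = c * fiberIntegral μH f (γ.symm q) := by
  induction q using QuotientGroup.induction_on with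
  | H x =>
    have hγ : γ.symm x = (α.symm x : G ⧸ H) := γ.symm_apply_eq.2 (by simp [hγα])
    have hβ (h : H) : α.symm h = β.symm h := α.symm_apply_eq.2 (by simp [← hβα])
    simp only [hγ, fiberIntegral_mk, map_mul, hβ]
    exact hc fun h => f (α.symm x * h)

lemma weilIntegral_comp_symm (hβα : ∀ h : H, (β h : G) = α h) (hγα : ∀ g : G, γ g = α g)
    [MeasurableSpace (G ⧸ H)] (μQ : Measure (G ⧸ H)) {cH cQ : ℝ}
    (hcH : ∀ f : H → ℝ, ∫ h, f (β.symm h) ∂μH = cH * ∫ h, f h ∂μH)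
    (hcQ : ∀ f : G ⧸ H → ℝ, ∫ q, f (γ.symm q) ∂μQ = cQ * ∫ q, f q ∂μQ) (f : G → ℝ) :
    weilIntegral μH μQ (fun x => f (α.symm x)) = cH * cQ * weilIntegral μH μQ f := by
  simp only [weilIntegral, fiberIntegral_comp_symm μH α β γ hβα hγα hcH, integral_const_mul,
    hcQ, mul_assoc]

end FiberAutomorphism

theorem stmt10_general {G : Type*} [Group G] [TopologicalSpace G] [IsTopologicalGroup G]
    [LocallyCompactSpace G] [MeasurableSpace G] [BorelSpace G]
    (H : Subgroup G) [H.Normal] (hHcl : IsClosed (H : Set G))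
    [MeasurableSpace H] [BorelSpace H]
    [MeasurableSpace (G ⧸ H)] [BorelSpace (G ⧸ H)]
    (α : G ≃* G) (hα : Continuous α) (hα' : Continuous α.symm)
    (β : H ≃* H) (hβ : Continuous β) (hβ' : Continuous β.symm)
    (hβα : ∀ h : H, (β h : G) = α (h : G))
    (γ : (G ⧸ H) ≃* (G ⧸ H)) (hγ : Continuous γ) (hγ' : Continuous γ.symm)
    (hγα : ∀ g : G, γ (QuotientGroup.mk g) = QuotientGroup.mk (α g))
    (μG : Measure G) [μG.IsHaarMeasure]
    (μH : Measure H) [μH.IsHaarMeasure]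
    (μQ : Measure (G ⧸ H)) [μQ.IsHaarMeasure]
    (ΔG ΔH ΔQ : ENNReal)
    (hΔG : ∀ S : Set G, MeasurableSet S → μG (α '' S) = ΔG * μG S)
    (hΔH : ∀ S : Set H, MeasurableSet S → μH (β '' S) = ΔH * μH S)
    (hΔQ : ∀ S : Set (G ⧸ H), MeasurableSet S → μQ (γ '' S) = ΔQ * μQ S) :
    ΔG = ΔH * ΔQ := by
  have : LocallyCompactSpace H := hHcl.isClosedEmbedding_subtypeVal.locallyCompactSpace
  obtain ⟨f, hf, h'f, f_nonneg, f_pos⟩ :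
      ∃ f : G → ℝ, Continuous f ∧ HasCompactSupport f ∧ 0 ≤ f ∧ f 1 ≠ 0 := by
    obtain ⟨f, h'f, f_nonneg, f_pos⟩ := exists_continuous_nonneg_pos (1 : G)
    exact ⟨f, f.continuous, h'f, f_nonneg, f_pos⟩
  have intG : ∀ f : G → ℝ, ∫ x, f (α.symm x) ∂μG = ΔG.toReal * ∫ x, f x ∂μG :=
    integral_comp_symm_of_measure_image_eq_mul ⟨α.toEquiv, hα, hα'⟩ hΔG
  have intH : ∀ f : H → ℝ, ∫ h, f (β.symm h) ∂μH = ΔH.toReal * ∫ h, f h ∂μH :=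
    integral_comp_symm_of_measure_image_eq_mul ⟨β.toEquiv, hβ, hβ'⟩ hΔH
  have intQ : ∀ f : G ⧸ H → ℝ, ∫ q, f (γ.symm q) ∂μQ = ΔQ.toReal * ∫ q, f q ∂μQ :=
    integral_comp_symm_of_measure_image_eq_mul ⟨γ.toEquiv, hγ, hγ'⟩ hΔQ
  have key := weilIntegral_mul_integral_eq μH μQ hHcl μG (f := fun x => f (α.symm x))
    (hf.comp hα') (h'f.comp_homeomorph ⟨α.symm.toEquiv, hα', hα⟩) hf h'f f_nonneg f_pos
  rw [weilIntegral_comp_symm μH α β γ hβα hγα μQ intH intQ, intG] at key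
  have hpos := mul_pos (weilIntegral_pos μH μQ hHcl hf h'f f_nonneg f_pos)
    (hf.integral_pos_of_hasCompactSupport_nonneg_nonzero h'f f_nonneg f_pos (μ := μG))
  have hreal : ΔG.toReal = ΔH.toReal * ΔQ.toReal :=
    (mul_right_cancel₀ hpos.ne' (by linear_combination key)).symm
  rw [← ENNReal.toReal_eq_toReal_iff' (ne_top_of_measure_image_eq_mul hα hΔG)
    (ENNReal.mul_ne_top (ne_top_of_measure_image_eq_mul hβ hΔH)
      (ne_top_of_measure_image_eq_mul hγ hΔQ)), ENNReal.toReal_mul, hreal]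

/-- Let `H` be a closed normal subgroup of a locally compact group `G` and `α`
a topological automorphism of `G` with `α(H) = H`. If `β` and `γ` are the induced automorphisms
of `H` and `G/H`, then the Braconnier modular factors satisfy `Δ_G(α) = Δ_H(β) · Δ_{G/H}(γ)`. -/
theorem stmt10 {G : Type*} [Group G] [TopologicalSpace G] [IsTopologicalGroup G]
    [LocallyCompactSpace G] [MeasurableSpace G] [BorelSpace G]
    (H : Subgroup G) [H.Normal] (hHcl : IsClosed (H : Set G))
    [MeasurableSpace H] [BorelSpace H]
    [MeasurableSpace (G ⧸ H)] [BorelSpace (G ⧸ H)]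
    (α : G ≃* G) (hα : Continuous α) (hα' : Continuous α.symm)
    (hαH : α '' (H : Set G) = (H : Set G))
    (β : H ≃* H) (hβ : Continuous β) (hβ' : Continuous β.symm)
    (hβα : ∀ h : H, (β h : G) = α (h : G))
    (γ : (G ⧸ H) ≃* (G ⧸ H)) (hγ : Continuous γ) (hγ' : Continuous γ.symm)
    (hγα : ∀ g : G, γ (QuotientGroup.mk g) = QuotientGroup.mk (α g))
    (μG : Measure G) [μG.IsHaarMeasure]
    (μH : Measure H) [μH.IsHaarMeasure]
    (μQ : Measure (G ⧸ H)) [μQ.IsHaarMeasure]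
    (ΔG ΔH ΔQ : ENNReal)
    (hΔG : ∀ S : Set G, MeasurableSet S → μG (α '' S) = ΔG * μG S)
    (hΔH : ∀ S : Set H, MeasurableSet S → μH (β '' S) = ΔH * μH S)
    (hΔQ : ∀ S : Set (G ⧸ H), MeasurableSet S → μQ (γ '' S) = ΔQ * μQ S) :
    ΔG = ΔH * ΔQ :=
  stmt10_general H hHcl α hα hα' β hβ hβ' hβα γ hγ hγ' hγα μG μH μQ ΔG ΔH ΔQ hΔG hΔH hΔQ
end

section
/- Let G be a locally compact abelian group with compact identity component, and let Λ be a lattice in G. Then K·Λ has finite index in G and K ∩ Λ is finite, where K is any compact open subgroup of G. In particular, if additionally G = K·Λ and K ∩ Λ = {1}, then G is topologically isomorphic to K × Λ, a product of a compact group and a discrete group. -/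
/-!
An open subgroup containing a cocompact subgroup has a compact discrete, hence finite, coset space;
a compact set meets a closed discrete subgroup in a finite set. When `K` and `Λ` are complementary,
multiplication `K × Λ → G` is a continuous isomorphism whose inverse is `k ↦ (k, 1)` on the open
subgroup `K`, so it is continuous at `1` and therefore everywhere.
-/

/-- A lattice in a topological group: a discrete, cocompact subgroup. -/
def Subgroup.IsTopLattice {G : Type*} [Group G] [TopologicalSpace G] (Λ : Subgroup G) : Prop :=
  DiscreteTopology Λ ∧ CompactSpace (G ⧸ Λ)

namespace Subgroup

variable {G : Type*}

theorem finiteIndex_of_le_of_isOpen [Group G] [TopologicalSpace G] [IsTopologicalGroup G]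
    {L H : Subgroup G} [CompactSpace (G ⧸ L)] (hLH : L ≤ H) (hH : IsOpen (H : Set G)) :
    H.FiniteIndex := by
  let q : G ⧸ L → G ⧸ H := Quotient.map' id fun _ _ hab =>
    QuotientGroup.leftRel_apply.mpr (hLH (QuotientGroup.leftRel_apply.mp hab))
  have hq : Continuous q := continuous_id.quotient_map' _
  have hq_surj : Function.Surjective q := fun x =>
    let ⟨g, hg⟩ := QuotientGroup.mk_surjective x; ⟨g, hg⟩
  have : CompactSpace (G ⧸ H) := ⟨hq_surj.range_eq ▸ isCompact_range hq⟩
  have := QuotientGroup.discreteTopology hH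
  have : Finite (G ⧸ H) := finite_of_compact_of_discrete
  exact finiteIndex_of_finite_quotient

theorem finite_inf_of_isCompact [Group G] [TopologicalSpace G] [IsTopologicalGroup G] [T2Space G]
    {K Λ : Subgroup G} [DiscreteTopology Λ] (hK : IsCompact (K : Set G)) :
    Finite (K ⊓ Λ : Subgroup G) :=
  ((hK.inter_right isClosed_of_discrete).finite
    ((isDiscrete_iff_discreteTopology.mpr ‹_›).mono Set.inter_subset_right)).to_subtype

open scoped Pointwise in
theorem isComplement'_of_sup_eq_top_of_inf_eq_bot [CommGroup G] {K Λ : Subgroup G}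
    (hsup : K ⊔ Λ = ⊤) (hinf : K ⊓ Λ = ⊥) : K.IsComplement' Λ :=
  isComplement'_of_disjoint_and_mul_eq_univ (disjoint_iff.mpr hinf)
    (by rw [← mul_normal, hsup, coe_top])

noncomputable def IsComplement'.continuousMulEquivProd [CommGroup G] [TopologicalSpace G]
    [IsTopologicalGroup G] {K Λ : Subgroup G} (h : K.IsComplement' Λ) (hK : IsOpen (K : Set G)) :
    G ≃ₜ* K × Λ :=
  let φ : K × Λ ≃* G := MulEquiv.ofBijective (MonoidHom.coprod K.subtype Λ.subtype) h
  { φ.symm with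
    continuous_toFun := by
      have h_on_K : ∀ k : K, φ.symm k = (k, 1) := fun k =>
        φ.symm_apply_eq.mpr (mul_one (k : G)).symm
      refine continuous_of_continuousAt_one φ.symm.toMonoidHom ?_
      rw [← K.coe_one, ← hK.isOpenEmbedding_subtypeVal.continuousAt_iff]
      exact (continuous_id.prodMk continuous_const).continuousAt.congr
        (Filter.Eventually.of_forall fun k => (h_on_K k).symm)
    continuous_invFun := by
      show Continuous fun p : K × Λ => (p.1 : G) * p.2
      fun_prop }

end Subgroup

theorem stmt16_general {G : Type*} [CommGroup G] [TopologicalSpace G] [IsTopologicalGroup G]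
    [T2Space G]
    (Λ : Subgroup G) (hΛ : Λ.IsTopLattice)
    (K : Subgroup G) (hKcomp : IsCompact (K : Set G)) (hKopen : IsOpen (K : Set G)) :
    (K ⊔ Λ).FiniteIndex ∧ Finite (K ⊓ Λ : Subgroup G) ∧
      (K ⊔ Λ = ⊤ → K ⊓ Λ = ⊥ →
        ∃ e : G ≃* K × Λ, Continuous e ∧ Continuous e.symm) := by
  obtain ⟨_, _⟩ := hΛ
  refine ⟨Subgroup.finiteIndex_of_le_of_isOpen le_sup_right
      (Subgroup.isOpen_mono le_sup_left hKopen),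
    Subgroup.finite_inf_of_isCompact hKcomp, fun hsup hinf => ?_⟩
  let e := (Subgroup.isComplement'_of_sup_eq_top_of_inf_eq_bot hsup hinf).continuousMulEquivProd
    hKopen
  exact ⟨e.toMulEquiv, e.continuous, e.symm.continuous⟩

/-- Let `G` be an LCA group with compact identity component, `Λ` a lattice in
`G` and `K` a compact open subgroup. Then `K·Λ` has finite index in `G` and `K ∩ Λ` is finite.
If moreover `G = K·Λ` and `K ∩ Λ = {1}`, then `G ≅ K × Λ` as topological groups. -/
theorem stmt16 {G : Type*} [CommGroup G] [TopologicalSpace G] [IsTopologicalGroup G]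
    [LocallyCompactSpace G] [T2Space G]
    (hG₀ : IsCompact (connectedComponent (1 : G)))
    (Λ : Subgroup G) (hΛ : Λ.IsTopLattice)
    (K : Subgroup G) (hKcomp : IsCompact (K : Set G)) (hKopen : IsOpen (K : Set G)) :
    (K ⊔ Λ).FiniteIndex ∧ Finite (K ⊓ Λ : Subgroup G) ∧
      (K ⊔ Λ = ⊤ → K ⊓ Λ = ⊥ →
        ∃ e : G ≃* K × Λ, Continuous e ∧ Continuous e.symm) :=
  stmt16_general Λ hΛ K hKcomp hKopen
end

section
/- Let Λ be a lattice in ℝⁿ × ℚ_Sⁿ, where ℚ_S is the restricted product of ℚ_p over p in a set S of primes with respect to ℤ_p. Then the projection f₁ onto ℝⁿ is injective on Λ, and the projection f₂ onto ℚ_Sⁿ has dense image f₂(Λ) in ℚ_Sⁿ. -/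
open scoped Classical

noncomputable section

instance factPrimesPrime (q : Nat.Primes) : Fact (q : ℕ).Prime := ⟨q.2⟩

variable (S : Set Nat.Primes)

/-- The additive group of the restricted product `∏'_{p ∈ S} ℚ_p` w.r.t. `ℤ_p`. -/
def QSgrp : AddSubgroup (∀ p : S, ℚ_[(p.1 : ℕ)]) where
  carrier := {x | {p : S | 1 < ‖x p‖}.Finite}
  zero_mem' := by
    refine Set.Finite.subset Set.finite_empty ?_
    intro p hp
    simp only [Set.mem_setOf_eq, Pi.zero_apply, norm_zero] at hp
    exact absurd hp (by norm_num)
  add_mem' := by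
    intro x y hx hy
    refine (hx.union hy).subset ?_
    intro p hp
    by_contra h
    simp only [Set.mem_union, Set.mem_setOf_eq, not_or, not_lt] at h
    exact absurd ((Padic.nonarchimedean (x p) (y p)).trans (max_le h.1 h.2)) (not_le.2 hp)
  neg_mem' := by
    intro x hx
    have h : {p : S | 1 < ‖(-x) p‖} = {p : S | 1 < ‖x p‖} := by
      ext p; simp
    show Set.Finite _
    rw [h]
    exact hx

/-- The restricted product `ℚ_S = ∏'_{p ∈ S} ℚ_p`. -/
def QS : Type _ := QSgrp S

instance : AddCommGroup (QS S) := inferInstanceAs (AddCommGroup (QSgrp S))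

/-- The subset of the full product supported (integrally) outside a finite set `F`. -/
def SFset (F : Finset S) : Set (∀ p : S, ℚ_[(p.1 : ℕ)]) :=
  {x | ∀ p : S, p ∉ F → ‖x p‖ ≤ 1}

theorem SFset_mem {F : Finset S} {x : ∀ p : S, ℚ_[(p.1 : ℕ)]} (hx : x ∈ SFset S F) :
    x ∈ QSgrp S := by
  refine F.finite_toSet.subset ?_
  intro p hp
  by_contra h
  exact absurd (hx p h) (not_le.2 hp)

/-- The restricted-product topology on `ℚ_S`: the inductive-limit topology of the subspaces
`S_F = {x : ∀ p, ‖x p‖ ≤ 1 for p ∉ F}` (each with the topology induced from the product),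
over finite sets `F`.  This is the usual topology on the restricted product, in which
`ℤ_S = ∏_{p ∈ S} ℤ_p` is a compact open subgroup. -/
instance (priority := 2000) QS.topologicalSpace : TopologicalSpace (QS S) :=
  ⨆ F : Finset S,
    TopologicalSpace.coinduced
      (fun y : SFset S F => (⟨y.1, SFset_mem S y.2⟩ : QS S)) inferInstance

end

noncomputable section
variable (S : Set Nat.Primes)

/-- A rational number, diagonally embedded in `ℚ_S`. -/
def ratQS (r : ℚ) : QS S :=
  ⟨fun p => (r : ℚ_[(p.1 : ℕ)]), by
    refine Set.Finite.subset (Set.Finite.preimage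
      (f := fun p : S => ((p.1 : ℕ) : ℤ)) ?_ (Set.finite_Icc (2 : ℤ) r.den)) ?_
    · intro a _ b _ hab
      simp only at hab
      exact Subtype.ext (Subtype.ext (by exact_mod_cast hab))
    · intro p hp
      simp only [Set.mem_setOf_eq] at hp
      have hdvd : (p.1 : ℕ) ∣ r.den := by
        by_contra h
        exact absurd (Padic.norm_rat_le_one h) (not_le.2 hp)
      constructor
      · show (2 : ℤ) ≤ ((p.1 : ℕ) : ℤ)
        exact_mod_cast p.1.2.two_le
      · show ((p.1 : ℕ) : ℤ) ≤ (r.den : ℤ)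
        exact_mod_cast Nat.le_of_dvd r.pos hdvd⟩

/-- The compact open subgroup `ℤ_S = ∏_{p ∈ S} ℤ_p` of `ℚ_S`. -/
def memZS (x : QS S) : Prop := ∀ p : S, ‖x.1 p‖ ≤ 1

end

/-- A lattice in a topological additive group: a discrete, cocompact subgroup. -/
def IsAddTopLattice {X : Type*} [AddGroup X] [TopologicalSpace X] (Λ : AddSubgroup X) : Prop :=
  DiscreteTopology Λ ∧ CompactSpace (X ⧸ Λ)

/-!
For every prime `p` we have `|m!|_p → 0`, so `m! • x → 0` in `ℚ_S`, uniformly for `x` in a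
box `{x | |x_p| ≤ p ^ M for p ∈ F, |x_p| ≤ 1 for p ∉ F}` (`F` finite); these boxes are open
and exhaust `ℚ_S`.

If `(0, y) ∈ Λ`, the lattice points `m! • (0, y)` tend to `0`, so discreteness forces
`m! • y = 0` for some `m`, hence `y = 0`. Cocompactness yields a single box `B` with
`Λ + (ℝⁿ × Bⁿ) = ℝⁿ × ℚ_Sⁿ`. Given `y ∈ ℚ_Sⁿ`, pick `u` with `u.2 ∈ Bⁿ` and
`(0, y / m!) + u ∈ Λ`; multiplying by `m!` shows `y + m! • u.2 ∈ pr₂ Λ`, and these points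
tend to `y`.
-/

open Filter Topology
open scoped Nat

lemma Nat.pow_div_dvd_factorial (p m : ℕ) : p ^ (m / p) ∣ m ! := by
  have hsum := Nat.prod_factorial_dvd_factorial_sum (Finset.range (m / p)) fun _ => p
  simp only [Finset.prod_const, Finset.sum_const, Finset.card_range, smul_eq_mul] at hsum
  calc p ^ (m / p) ∣ p ! ^ (m / p) := by
        rcases p.eq_zero_or_pos with rfl | hp
        · simp
        · exact pow_dvd_pow_of_dvd (Nat.dvd_factorial hp le_rfl) _
    _ ∣ (m / p * p)! := hsum
    _ ∣ m ! := Nat.factorial_dvd_factorial (Nat.div_mul_le_self m p)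

namespace Padic

variable (p : ℕ) [Fact p.Prime]

lemma norm_factorial_le (m : ℕ) : ‖(m ! : ℚ_[p])‖ ≤ (p : ℝ)⁻¹ ^ (m / p) := by
  have h := (norm_int_le_pow_iff_dvd (p := p) (m ! : ℤ) (m / p)).2
    (by exact_mod_cast Nat.pow_div_dvd_factorial p m)
  rwa [zpow_neg, zpow_natCast, ← inv_pow, Int.cast_natCast] at h

lemma tendsto_factorial : Tendsto (fun m : ℕ => (m ! : ℚ_[p])) atTop (𝓝 0) := by
  have hp : (1 : ℝ) < p := by exact_mod_cast (Fact.out : p.Prime).one_lt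
  refine squeeze_zero_norm (norm_factorial_le p) ?_
  exact (tendsto_pow_atTop_nhds_zero_of_lt_one (by positivity) (inv_lt_one_of_one_lt₀ hp)).comp
    (Nat.tendsto_div_const_atTop (Fact.out : p.Prime).ne_zero)

end Padic

namespace QS

variable {S : Set Nat.Primes}

lemma eq_zero_of_nsmul_eq_zero {m : ℕ} (hm : m ≠ 0) {x : QS S} (h : m • x = 0) : x = 0 :=
  Subtype.ext ((smul_eq_zero.1 (congrArg Subtype.val h)).resolve_left hm)

lemma exists_nsmul_eq {m : ℕ} (hm : m ≠ 0) (y : QS S) : ∃ z : QS S, m • z = y := by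
  have hdvd : {p : S | (p.1 : ℕ) ∣ m}.Finite :=
    (m.divisors.finite_toSet.preimage
      (Nat.Primes.coe_nat_injective.comp Subtype.val_injective).injOn).subset
      fun p hp => Nat.mem_divisors.2 ⟨hp, hm⟩
  refine ⟨⟨fun p => (m : ℚ_[(p.1 : ℕ)])⁻¹ * y.1 p, (y.2.union hdvd).subset fun p hp => ?_⟩, ?_⟩
  · by_contra hbad
    simp only [Set.mem_union, Set.mem_setOf_eq, not_or, not_lt] at hp hbad
    have hunit : ‖(m : ℚ_[(p.1 : ℕ)])‖ = 1 :=
      Padic.norm_natCast_eq_one_iff.2 ((Nat.Prime.coprime_iff_not_dvd p.1.2).2 hbad.2)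
    rw [norm_mul, norm_inv, hunit, inv_one, one_mul] at hp
    exact hp.not_ge hbad.1
  · refine Subtype.ext (funext fun p => ?_)
    change m • ((m : ℚ_[(p.1 : ℕ)])⁻¹ * y.1 p) = y.1 p
    rw [nsmul_eq_mul, mul_inv_cancel_left₀ (Nat.cast_ne_zero.2 hm)]

def ofSFset {F : Finset S} (y : SFset S F) : QS S := ⟨y.1, SFset_mem S y.2⟩

lemma continuous_ofSFset (F : Finset S) : Continuous (ofSFset (F := F)) :=
  continuous_iSup_rng (i := F) continuous_coinduced_rng

lemma continuous_of_forall_continuous_comp_ofSFset {Y : Type*} [TopologicalSpace Y]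
    {f : QS S → Y} (h : ∀ F : Finset S, Continuous (f ∘ ofSFset (F := F))) : Continuous f :=
  continuous_iSup_dom.2 fun F => continuous_coinduced_dom.2 (h F)

lemma continuous_add_const (a : QS S) : Continuous (· + a) := by
  refine continuous_of_forall_continuous_comp_ofSFset fun F => ?_
  have ha : {p : S | 1 < ‖a.1 p‖}.Finite := a.2
  have hmem (y : SFset S F) : y.1 + a.1 ∈ SFset S (F ∪ ha.toFinset) := fun p hp => by
    simp only [Finset.mem_union, Set.Finite.mem_toFinset, Set.mem_setOf_eq, not_or, not_lt] at hp
    exact (Padic.nonarchimedean _ _).trans (max_le (y.2 p hp.1) hp.2)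
  have hcomp : (· + a) ∘ ofSFset (F := F) = ofSFset ∘ fun y => ⟨y.1 + a.1, hmem y⟩ := rfl
  rw [hcomp]
  exact (continuous_ofSFset _).comp ((continuous_subtype_val.add continuous_const).subtype_mk _)

instance : SeparatelyContinuousAdd (QS S) where
  continuous_const_add {a} := by simpa only [add_comm a] using continuous_add_const a
  continuous_add_const {a} := continuous_add_const a

-- The radius `p ^ M` rather than `M` is `≥ 1`, which makes `box` monotone in both indices.
def box (i : Finset S × ℕ) : Set (QS S) :=
  {x | ∀ p : S, ‖x.1 p‖ ≤ ((p.1 : ℕ) : ℝ) ^ (if p ∈ i.1 then i.2 else 0)}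

lemma one_lt_prime (p : S) : (1 : ℝ) < (p.1 : ℕ) := by exact_mod_cast p.1.2.one_lt

lemma box_mono : Monotone (box (S := S)) := by
  rintro ⟨F, M⟩ ⟨F', M'⟩ ⟨hF, hM⟩ x hx p
  refine (hx p).trans (pow_le_pow_right₀ (one_lt_prime p).le ?_)
  by_cases hp : p ∈ F
  · simp [hp, hF hp, hM]
  · simp [hp]

lemma val_mem_SFset_of_mem_box {i : Finset S × ℕ} {x : QS S} (hx : x ∈ box i) :
    x.1 ∈ SFset S i.1 := fun p hp => by simpa [hp] using hx p

lemma isOpen_box (i : Finset S × ℕ) : IsOpen (box i) := by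
  rw [isOpen_iff_continuous_mem]
  refine continuous_of_forall_continuous_comp_ofSFset fun F => ?_
  suffices IsOpen (ofSFset (F := F) ⁻¹' box i) from isOpen_iff_continuous_mem.1 this
  have hpre : ofSFset ⁻¹' box i = ⋂ p ∈ i.1 ∪ F, (fun y : SFset S F => y.1 p) ⁻¹'
      Metric.closedBall 0 (((p.1 : ℕ) : ℝ) ^ (if p ∈ i.1 then i.2 else 0)) := by
    ext y
    simp only [Set.mem_preimage, Set.mem_iInter, mem_closedBall_zero_iff]
    refine ⟨fun hy p _ => hy p, fun hy p => ?_⟩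
    by_cases hp : p ∈ i.1 ∪ F
    · exact hy p hp
    · simp only [Finset.mem_union, not_or] at hp
      change ‖y.1 p‖ ≤ _
      simpa [hp.1] using y.2 p hp.2
  rw [hpre]
  have hpos (p : S) : (0 : ℝ) < (p.1 : ℕ) := zero_lt_one.trans (one_lt_prime p)
  exact isOpen_biInter_finset fun p _ =>
    (IsUltrametricDist.isOpen_closedBall _ (pow_pos (hpos p) _).ne').preimage
      ((continuous_apply p).comp continuous_subtype_val)

lemma exists_mem_box (x : QS S) : ∃ i, x ∈ box i := by
  have hx : {p : S | 1 < ‖x.1 p‖}.Finite := x.2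
  choose M hM using fun p : S => pow_unbounded_of_one_lt ‖x.1 p‖ (one_lt_prime p)
  refine ⟨(hx.toFinset, hx.toFinset.sup M), fun p => ?_⟩
  by_cases hp : p ∈ hx.toFinset
  · rw [if_pos hp]
    exact (hM p).le.trans (pow_le_pow_right₀ (one_lt_prime p).le (Finset.le_sup hp))
  · rw [if_neg hp, pow_zero]
    exact not_lt.1 fun h => hp (hx.mem_toFinset.2 h)

lemma exists_forall_mem_box {ι : Type*} [Finite ι] (z : ι → QS S) :
    ∃ i, ∀ c, z c ∈ box i := by
  choose k hk using fun c => exists_mem_box (z c)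
  obtain ⟨i, hi⟩ := Finite.bddAbove_range k
  exact ⟨i, fun c => box_mono (hi ⟨c, rfl⟩) (hk c)⟩

lemma nsmul_mem_box {i : Finset S × ℕ} {x : QS S} (hx : x ∈ box i) (k : ℕ) : k • x ∈ box i :=
  fun p => by
    change ‖k • x.1 p‖ ≤ _
    have hk : ‖(k : ℚ_[(p.1 : ℕ)])‖ ≤ 1 := by exact_mod_cast Padic.norm_int_le_one (k : ℤ)
    rw [nsmul_eq_mul, norm_mul]
    exact (mul_le_of_le_one_left (norm_nonneg _) hk).trans (hx p)

lemma tendsto_factorial_nsmul {i : Finset S × ℕ} {w : ℕ → QS S} (hw : ∀ m, w m ∈ box i) :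
    Tendsto (fun m => m ! • w m) atTop (𝓝 0) := by
  let v (m : ℕ) : SFset S i.1 :=
    ⟨(m ! • w m).1, val_mem_SFset_of_mem_box (nsmul_mem_box (hw m) _)⟩
  have h0 : (0 : ∀ p : S, ℚ_[(p.1 : ℕ)]) ∈ SFset S i.1 := fun p _ => by simp
  suffices Tendsto v atTop (𝓝 ⟨0, h0⟩) from ((continuous_ofSFset _).tendsto _).comp this
  rw [tendsto_subtype_rng, tendsto_pi_nhds]
  intro p
  have hbound := (Padic.tendsto_factorial (p.1 : ℕ)).norm.mul_const
    (((p.1 : ℕ) : ℝ) ^ (if p ∈ i.1 then i.2 else 0))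
  rw [norm_zero, zero_mul] at hbound
  refine squeeze_zero_norm (fun m => ?_) hbound
  change ‖m ! • (w m).1 p‖ ≤ _
  rw [nsmul_eq_mul, norm_mul]
  exact mul_le_mul_of_nonneg_left (hw m p) (norm_nonneg _)

end QS

theorem AddSubgroup.exists_add_mem_of_directed_open_cover {G ι : Type*} [AddGroup G]
    [TopologicalSpace G] [SeparatelyContinuousAdd G] (Λ : AddSubgroup G) [CompactSpace (G ⧸ Λ)]
    [Nonempty ι] {U : ι → Set G} (hopen : ∀ i, IsOpen (U i)) (hcover : ⋃ i, U i = Set.univ)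
    (hdir : Directed (· ⊆ ·) U) : ∃ i, ∀ g : G, ∃ u ∈ U i, g + u ∈ Λ := by
  obtain ⟨i, hi⟩ := isCompact_univ.elim_directed_cover (fun i => ((↑) : G → G ⧸ Λ) '' U i)
    (fun i => QuotientAddGroup.isOpenMap_coe _ (hopen i))
    (by rw [← Set.image_iUnion, hcover,
      Set.image_univ_of_surjective QuotientAddGroup.mk_surjective])
    (fun a b => let ⟨c, hac, hbc⟩ := hdir a b; ⟨c, Set.image_mono hac, Set.image_mono hbc⟩)
  refine ⟨i, fun g => ?_⟩
  obtain ⟨u, hu, hug⟩ := hi (Set.mem_univ ((-g : G) : G ⧸ Λ))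
  refine ⟨u, hu, ?_⟩
  simpa using neg_mem (QuotientAddGroup.eq.1 hug)

section Lattice

variable {S : Set Nat.Primes} {n : ℕ} (Λ : AddSubgroup ((Fin n → ℝ) × (Fin n → QS S)))

lemma snd_eq_zero_of_fst_eq_zero [DiscreteTopology Λ] {x : (Fin n → ℝ) × (Fin n → QS S)}
    (hx : x ∈ Λ) (hx₁ : x.1 = 0) : x.2 = 0 := by
  obtain ⟨i, hi⟩ := QS.exists_forall_mem_box x.2
  have hlim : Tendsto (fun m => m ! • x) atTop (𝓝 0) := by
    rw [← Prod.mk_zero_zero]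
    refine Tendsto.prodMk_nhds ?_
      (tendsto_pi_nhds.2 fun c => QS.tendsto_factorial_nsmul fun _ => hi c)
    simp [hx₁]
  have hlimΛ : Tendsto (fun m => (⟨m ! • x, nsmul_mem hx _⟩ : Λ)) atTop (𝓝 0) :=
    tendsto_subtype_rng.2 hlim
  rw [nhds_discrete, tendsto_pure] at hlimΛ
  obtain ⟨m, hm⟩ := hlimΛ.exists
  have hm₂ : m ! • x.2 = 0 := congrArg Prod.snd (congrArg Subtype.val hm)
  exact funext fun c => QS.eq_zero_of_nsmul_eq_zero (Nat.factorial_ne_zero m) (congrFun hm₂ c)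

lemma exists_add_mem_box [CompactSpace (((Fin n → ℝ) × (Fin n → QS S)) ⧸ Λ)] :
    ∃ i, ∀ g, ∃ u : (Fin n → ℝ) × (Fin n → QS S), (∀ c, u.2 c ∈ QS.box i) ∧ g + u ∈ Λ := by
  let U (i : Finset S × ℕ) : Set ((Fin n → ℝ) × (Fin n → QS S)) :=
    Metric.ball 0 i.2 ×ˢ Set.univ.pi fun _ => QS.box i
  have hmono : Monotone U := fun i j hij =>
    Set.prod_mono (Metric.ball_subset_ball (by exact_mod_cast hij.2))
      (Set.pi_mono fun _ _ => QS.box_mono hij)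
  have hcover : ⋃ i, U i = Set.univ := by
    refine Set.eq_univ_of_forall fun g => ?_
    obtain ⟨i, hi⟩ := QS.exists_forall_mem_box g.2
    obtain ⟨R, hR⟩ := exists_nat_gt ‖g.1‖
    refine Set.mem_iUnion.2 ⟨(i.1, max i.2 R), ?_, fun c _ => ?_⟩
    · exact mem_ball_zero_iff.2 (hR.trans_le (by exact_mod_cast le_max_right _ _))
    · exact QS.box_mono (show i ≤ (i.1, max i.2 R) from ⟨le_rfl, le_max_left _ _⟩) (hi c)
  obtain ⟨i, hi⟩ := Λ.exists_add_mem_of_directed_open_cover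
    (fun i => Metric.isOpen_ball.prod (isOpen_set_pi Set.finite_univ fun _ _ => QS.isOpen_box i))
    hcover hmono.directed_le
  exact ⟨i, fun g => let ⟨u, hu, hgu⟩ := hi g; ⟨u, fun c => hu.2 c trivial, hgu⟩⟩

lemma dense_snd_image [CompactSpace (((Fin n → ℝ) × (Fin n → QS S)) ⧸ Λ)] :
    Dense (Prod.snd '' (Λ : Set ((Fin n → ℝ) × (Fin n → QS S)))) := by
  obtain ⟨i, hi⟩ := exists_add_mem_box Λ
  intro y
  choose z hz using fun m c => QS.exists_nsmul_eq (Nat.factorial_ne_zero m) (y c)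
  choose u hu huΛ using fun m => hi (0, z m)
  have hsnd (m : ℕ) : (m ! • ((0, z m) + u m)).2 = y + m ! • (u m).2 := by
    ext c
    simp [hz]
  have hsmall : Tendsto (fun m => m ! • (u m).2) atTop (𝓝 0) :=
    tendsto_pi_nhds.2 fun c => QS.tendsto_factorial_nsmul fun m => hu m c
  have hlim : Tendsto (fun m => y + m ! • (u m).2) atTop (𝓝 y) := by
    have := ((continuous_const_add y).tendsto 0).comp hsmall
    rwa [add_zero] at this
  exact mem_closure_of_tendsto hlim
    (Eventually.of_forall fun m => ⟨_, nsmul_mem (huΛ m) _, hsnd m⟩)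

end Lattice

/-- Let `Λ` be a lattice in `ℝⁿ × ℚ_Sⁿ`. Then the projection onto `ℝⁿ` is
injective on `Λ`, and the projection onto `ℚ_Sⁿ` has dense image. -/
theorem stmt18 (S : Set Nat.Primes) (n : ℕ)
    (Λ : AddSubgroup ((Fin n → ℝ) × (Fin n → QS S))) (hΛ : IsAddTopLattice Λ) :
    Set.InjOn Prod.fst (Λ : Set ((Fin n → ℝ) × (Fin n → QS S))) ∧
      Dense (Prod.snd '' (Λ : Set ((Fin n → ℝ) × (Fin n → QS S)))) := by
  obtain ⟨hdiscrete, hcocompact⟩ := hΛ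
  refine ⟨fun a ha b hb hab => ?_, dense_snd_image Λ⟩
  have hsnd := snd_eq_zero_of_fst_eq_zero Λ (sub_mem ha hb) (sub_eq_zero.2 hab)
  exact sub_eq_zero.1 (Prod.ext (sub_eq_zero.2 hab) hsnd)
end
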